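/- arXiv:1812.10291 — 2 statements merged into one kernel-verified Lean document; each statement's English description precedes it below -/
import Mathlib

section
/- Let R be a σ-skew Armendariz ring. Then R is symmetric and σ-compatible if and only if R is strongly σ-symmetric. -/
/-- The coefficient of `x^n` in the product of two skew polynomials in `R[x;σ]`
(where `x·r = σ(r)·x`), given their coefficient functions. -/
def skewMul {R : Type*} [Ring R] (σ : R →+* R) (p q : ℕ → R) : ℕ → R :=
  fun n => ∑ i ∈ Finset.range (n + 1), p i * (⇑σ)^[i] (q (n - i))

/-- A ring is symmetric if `abc = 0` implies `acb = 0`. -/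
def SymmetricRing (R : Type*) [Ring R] : Prop :=
  ∀ a b c : R, a * b * c = 0 → a * c * b = 0

/-- `R` is strongly `σ`-symmetric if the skew polynomial ring `R[x;σ]` is symmetric,
expressed via the coefficientwise skew convolution. -/
def StronglySkewSymmetric (R : Type*) [Ring R] (σ : R →+* R) : Prop :=
  ∀ p q r : Polynomial R,
    skewMul σ (skewMul σ p.coeff q.coeff) r.coeff = 0 →
    skewMul σ (skewMul σ p.coeff r.coeff) q.coeff = 0

/-- `R` is `σ`-skew Armendariz. -/
def SkewArmendariz (R : Type*) [Ring R] (σ : R →+* R) : Prop :=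
  ∀ p q : Polynomial R, skewMul σ p.coeff q.coeff = 0 →
    ∀ i j, p.coeff i * (⇑σ)^[i] (q.coeff j) = 0

section Aux

variable {R : Type*} [Ring R] (σ : R →+* R)

lemma skewMul_C_left (a : R) (g : ℕ → R) :
    skewMul σ (Polynomial.C a).coeff g = fun n => a * g n := by
  funext n
  unfold skewMul
  rw [Finset.sum_eq_single 0]
  · simp
  · intro i _ hi
    rw [Polynomial.coeff_C, if_neg hi, zero_mul]
  · intro h
    exact absurd (Finset.mem_range.2 (Nat.succ_pos n)) h

lemma skewMul_C_right (f : ℕ → R) (b : R) :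
    skewMul σ f (Polynomial.C b).coeff = fun n => f n * (⇑σ)^[n] b := by
  funext n
  unfold skewMul
  rw [Finset.sum_eq_single n]
  · simp
  · intro i hi hne
    have hin : i ≤ n := Nat.lt_succ_iff.1 (Finset.mem_range.1 hi)
    have : n - i ≠ 0 := Nat.sub_ne_zero_of_lt (lt_of_le_of_ne hin hne)
    rw [Polynomial.coeff_C, if_neg this, iterate_map_zero, mul_zero]
  · intro h
    exact absurd (Finset.mem_range.2 (Nat.lt_succ_self n)) h

/-- Iterated compatibility. -/
lemma compat_iter (hc : ∀ a b : R, a * b = 0 ↔ a * σ b = 0) :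
    ∀ (n : ℕ) (a b : R), a * b = 0 ↔ a * (⇑σ)^[n] b = 0 := by
  intro n
  induction n with
  | zero => intro a b; simp
  | succ n ih =>
    intro a b
    rw [Function.iterate_succ_apply']
    exact (ih a b).trans (hc a ((⇑σ)^[n] b))

/-- A function with bounded support is the coefficient function of a polynomial. -/
lemma exists_poly (f : ℕ → R) (N : ℕ) (h : ∀ n, N ≤ n → f n = 0) :
    ∃ P : Polynomial R, P.coeff = f := by
  refine ⟨∑ n ∈ Finset.range N, Polynomial.monomial n (f n), funext fun m => ?_⟩
  rw [Polynomial.finset_sum_coeff]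
  simp only [Polynomial.coeff_monomial]
  rw [Finset.sum_ite_eq' (Finset.range N) m f]
  by_cases hm : m ∈ Finset.range N
  · rw [if_pos hm]
  · rw [if_neg hm, eq_comm]
    exact h m (le_of_not_gt fun hlt => hm (Finset.mem_range.2 hlt))

lemma skewMul_bound (p q : Polynomial R) :
    ∀ n, p.natDegree + q.natDegree + 1 ≤ n → skewMul σ p.coeff q.coeff n = 0 := by
  intro n hn
  unfold skewMul
  apply Finset.sum_eq_zero
  intro i _
  by_cases hip : i ≤ p.natDegree
  · have : q.natDegree < n - i := by omega
    rw [Polynomial.coeff_eq_zero_of_natDegree_lt this, iterate_map_zero, mul_zero]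
  · rw [Polynomial.coeff_eq_zero_of_natDegree_lt (lt_of_not_ge hip), zero_mul]

end Aux

theorem symmetric_compatible_iff_stronglySkewSymmetric
    {R : Type*} [Ring R] (σ : R →+* R) (hA : SkewArmendariz R σ) :
    (SymmetricRing R ∧ ∀ a b : R, a * b = 0 ↔ a * σ b = 0) ↔
      StronglySkewSymmetric R σ := by
  constructor
  · rintro ⟨hsym, hc⟩ p q r h
    have hci := compat_iter σ hc
    -- represent skewMul p q as a polynomial
    obtain ⟨PQ, hPQ⟩ := exists_poly (skewMul σ p.coeff q.coeff)
      (p.natDegree + q.natDegree + 1) (skewMul_bound σ p q)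
    have h1 : ∀ n k, skewMul σ p.coeff q.coeff n * (⇑σ)^[n] (r.coeff k) = 0 := by
      intro n k
      have := hA PQ r (by rw [hPQ]; exact h) n k
      rwa [hPQ] at this
    have key : ∀ i j k, p.coeff i * r.coeff k * q.coeff j = 0 := by
      intro i j k
      obtain ⟨QK, hQK⟩ := exists_poly (fun j => q.coeff j * (⇑σ)^[j] (r.coeff k))
        (q.natDegree + 1) (by
          intro n hn
          show q.coeff n * (⇑σ)^[n] (r.coeff k) = 0
          rw [Polynomial.coeff_eq_zero_of_natDegree_lt (by omega : q.natDegree < n),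
            zero_mul])
      have hz : skewMul σ p.coeff QK.coeff = 0 := by
        funext m
        show (∑ i ∈ Finset.range (m + 1), p.coeff i * (⇑σ)^[i] (QK.coeff (m - i))) = 0
        have : ∀ i ∈ Finset.range (m + 1),
            p.coeff i * (⇑σ)^[i] (QK.coeff (m - i)) =
              p.coeff i * (⇑σ)^[i] (q.coeff (m - i)) * (⇑σ)^[m] (r.coeff k) := by
          intro i hi
          have him : i ≤ m := Nat.lt_succ_iff.1 (Finset.mem_range.1 hi)
          rw [hQK]
          show p.coeff i * (⇑σ)^[i] (q.coeff (m - i) * (⇑σ)^[m - i] (r.coeff k)) = _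
          rw [iterate_map_mul, ← Function.iterate_add_apply,
            Nat.add_sub_cancel' him, mul_assoc]
        rw [Finset.sum_congr rfl this, ← Finset.sum_mul]
        exact h1 m k
      have h2 := hA p QK hz i j
      rw [hQK] at h2
      have t0 : p.coeff i * (⇑σ)^[i] (q.coeff j) * (⇑σ)^[i + j] (r.coeff k) = 0 := by
        have : p.coeff i * (⇑σ)^[i] (q.coeff j * (⇑σ)^[j] (r.coeff k)) = 0 := h2
        rwa [iterate_map_mul, ← Function.iterate_add_apply, ← mul_assoc] at this
      have t1 : p.coeff i * (⇑σ)^[i] (q.coeff j) * r.coeff k = 0 :=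
        (hci (i + j) _ _).2 t0
      have t2 : p.coeff i * r.coeff k * (⇑σ)^[i] (q.coeff j) = 0 := hsym _ _ _ t1
      exact (hci i _ _).2 t2
    funext m
    show (∑ n ∈ Finset.range (m + 1),
      skewMul σ p.coeff r.coeff n * (⇑σ)^[n] (q.coeff (m - n))) = 0
    apply Finset.sum_eq_zero
    intro n hn
    show (∑ i ∈ Finset.range (n + 1), p.coeff i * (⇑σ)^[i] (r.coeff (n - i))) *
        (⇑σ)^[n] (q.coeff (m - n)) = 0
    rw [Finset.sum_mul]
    apply Finset.sum_eq_zero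
    intro i hi
    have hin : i ≤ n := Nat.lt_succ_iff.1 (Finset.mem_range.1 hi)
    have step : p.coeff i * (r.coeff (n - i) * (⇑σ)^[n - i] (q.coeff (m - n))) = 0 := by
      rw [← mul_assoc]
      exact (hci (n - i) _ _).1 (key i (m - n) (n - i))
    calc p.coeff i * (⇑σ)^[i] (r.coeff (n - i)) * (⇑σ)^[n] (q.coeff (m - n))
        = p.coeff i * (⇑σ)^[i] (r.coeff (n - i) * (⇑σ)^[n - i] (q.coeff (m - n))) := by
          rw [iterate_map_mul, ← Function.iterate_add_apply,
            Nat.add_sub_cancel' hin, mul_assoc]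
      _ = 0 := (hci i _ _).1 step
  · intro hS
    constructor
    · intro a b c habc
      have hyp : skewMul σ (skewMul σ (Polynomial.C a).coeff (Polynomial.C b).coeff)
          (Polynomial.C c).coeff = 0 := by
        rw [skewMul_C_left, skewMul_C_right]
        funext n
        show a * (Polynomial.C b).coeff n * (⇑σ)^[n] c = 0
        rcases eq_or_ne n 0 with rfl | hn
        · simpa using habc
        · rw [Polynomial.coeff_C, if_neg hn, mul_zero, zero_mul]
      have := hS (Polynomial.C a) (Polynomial.C b) (Polynomial.C c) hyp
      rw [skewMul_C_left, skewMul_C_right] at this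
      have h0 := congrFun this 0
      simpa using h0
    · intro a b
      constructor
      · intro hab
        have hyp : skewMul σ (skewMul σ (Polynomial.C a).coeff (Polynomial.C b).coeff)
            (Polynomial.X : Polynomial R).coeff = 0 := by
          rw [skewMul_C_left]
          have hfe : (fun n => a * (Polynomial.C b).coeff n) =
              (Polynomial.C (a * b) : Polynomial R).coeff := by
            funext n
            rw [Polynomial.coeff_C, Polynomial.coeff_C]
            split <;> simp_all
          rw [hfe, skewMul_C_left]
          funext n
          show (a * b) * (Polynomial.X : Polynomial R).coeff n = 0
          rw [hab, zero_mul]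
        have := hS (Polynomial.C a) (Polynomial.C b) Polynomial.X hyp
        rw [skewMul_C_left, skewMul_C_right] at this
        have h1 := congrFun this 1
        simpa using h1
      · intro hab
        have hyp : skewMul σ (skewMul σ (Polynomial.C a).coeff
            (Polynomial.X : Polynomial R).coeff) (Polynomial.C b).coeff = 0 := by
          rw [skewMul_C_left, skewMul_C_right]
          funext n
          show a * (Polynomial.X : Polynomial R).coeff n * (⇑σ)^[n] b = 0
          rcases eq_or_ne n 1 with rfl | hn
          · simpa using hab
          · rw [Polynomial.coeff_X, if_neg (fun h => hn h.symm), mul_zero, zero_mul]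
        have := hS (Polynomial.C a) Polynomial.X (Polynomial.C b) hyp
        rw [skewMul_C_left] at this
        have hfe : (fun n => a * (Polynomial.C b).coeff n) =
            (Polynomial.C (a * b) : Polynomial R).coeff := by
          funext n
          rw [Polynomial.coeff_C, Polynomial.coeff_C]
          split <;> simp_all
        rw [hfe, skewMul_C_left] at this
        have h1 := congrFun this 1
        simpa using h1
end

section
/- Let R be a σ-rigid ring with endomorphism σ. Then the quotient ring R[x]/(xⁿ) (equivalently the ring Vₙ(R) of upper triangular n×n matrices constant along diagonals) is strongly σ̄-symmetric, where σ̄ acts entrywise (coefficientwise). -/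
/-- The subring `S` of `R` (closed under the operations and `σ`) is strongly
`σ`-symmetric: the symmetry condition for skew polynomials with coefficients in `S`. -/
def StronglySkewSymmetricOn {R : Type*} [Ring R] (σ : R →+* R) (S : Set R) : Prop :=
  ∀ p q r : Polynomial R,
    (∀ n, p.coeff n ∈ S) → (∀ n, q.coeff n ∈ S) → (∀ n, r.coeff n ∈ S) →
    skewMul σ (skewMul σ p.coeff q.coeff) r.coeff = 0 →
    skewMul σ (skewMul σ p.coeff r.coeff) q.coeff = 0

/-- `Vₙ(R)`: upper triangular `n × n` matrices that are constant along diagonals;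
this subring of `Matrix (Fin n) (Fin n) R` is isomorphic to `R[x]/(xⁿ)`. -/
def Vn (R : Type*) [Ring R] (n : ℕ) : Set (Matrix (Fin n) (Fin n) R) :=
  {M | (∀ i j : Fin n, (j : ℕ) < (i : ℕ) → M i j = 0) ∧
    ∀ i j i' j' : Fin n, (i : ℕ) + (j' : ℕ) = (i' : ℕ) + (j : ℕ) → M i j = M i' j'}


section RigidLemmas

variable {R : Type*} [Ring R] {σ : R →+* R}

private lemma it_mul (σ : R →+* R) (m : ℕ) (x y : R) :
    (⇑σ)^[m] (x * y) = (⇑σ)^[m] x * (⇑σ)^[m] y := by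
  rw [← RingHom.coe_pow, map_mul]

private lemma it_zero (σ : R →+* R) (m : ℕ) : (⇑σ)^[m] (0 : R) = 0 := by
  rw [← RingHom.coe_pow, map_zero]

variable (h : ∀ a : R, a * σ a = 0 → a = 0)
include h

private lemma rig_red (a : R) (ha : a * a = 0) : a = 0 := by
  have hs : σ a * σ a = 0 := by rw [← map_mul, ha, map_zero]
  have h1 : (a * σ a) * σ (a * σ a) = 0 := by
    rw [map_mul, show a * σ a * (σ a * σ (σ a)) = a * (σ a * σ a) * σ (σ a) by noncomm_ring,
      hs, mul_zero, zero_mul]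
  exact h a (h _ h1)

private lemma rig_swap {a b : R} (hab : a * b = 0) : b * a = 0 := by
  refine rig_red h _ ?_
  rw [show (b*a)*(b*a) = b*((a*b)*a) by noncomm_ring, hab, zero_mul, mul_zero]

private lemma rig_sig {a b : R} (hab : a * b = 0) : a * σ b = 0 := by
  have hba := rig_swap h hab
  apply h
  rw [map_mul, show a * σ b * (σ a * σ (σ b)) = a * (σ b * σ a) * σ (σ b) by noncomm_ring,
    ← map_mul, hba, map_zero, mul_zero, zero_mul]

private lemma rig_sigIt {a b : R} (hab : a * b = 0) (m : ℕ) : a * (⇑σ)^[m] b = 0 := by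
  induction m with
  | zero => simpa using hab
  | succ m ih => rw [Function.iterate_succ_apply']; exact rig_sig h ih

private lemma rig_sigIt' {a b : R} (hab : a * b = 0) (m : ℕ) : (⇑σ)^[m] a * b = 0 :=
  rig_swap h (rig_sigIt h (rig_swap h hab) m)

private lemma rig_itCancel {a : R} (m : ℕ) (ha : (⇑σ)^[m] a = 0) : a = 0 := by
  induction m with
  | zero => simpa using ha
  | succ m ih =>
    rw [Function.iterate_succ_apply'] at ha
    refine ih ?_
    have : (⇑σ)^[m] a * σ ((⇑σ)^[m] a) = 0 := by rw [ha, mul_zero]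
    exact h _ this

private lemma rig_unsig {a b : R} (m : ℕ) (hab : a * (⇑σ)^[m] b = 0) : a * b = 0 := by
  have h1 : (⇑σ)^[m] b * a = 0 := rig_swap h hab
  have h2 : (⇑σ)^[m] b * (⇑σ)^[m] a = 0 := rig_sigIt h h1 m
  rw [← it_mul] at h2
  exact rig_swap h (rig_itCancel h m h2)

private lemma rig_mid {a b : R} (hab : a * b = 0) (x : R) : a * x * b = 0 := by
  refine rig_red h _ ?_
  rw [show (a*x*b)*(a*x*b) = a*x*((b*a)*(x*b)) by noncomm_ring, rig_swap h hab,
    zero_mul, mul_zero]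

private lemma rig_symm {a b c : R} (habc : a * b * c = 0) : a * c * b = 0 := by
  have h1 : c * (a * b) = 0 := rig_swap h habc
  have h3 : ∀ x : R, b * (c * x * a) = 0 := by
    intro x
    refine rig_swap h ?_
    rw [show (c*x*a)*b = c*x*(a*b) by noncomm_ring]
    exact rig_mid h h1 x
  have h4 : ∀ x y : R, b * y * (c * x * a) = 0 := fun x y => rig_mid h (h3 x) y
  have hc : (a*c*b)*(a*c*b)*(a*c*b) = 0 := by
    rw [show (a*c*b)*(a*c*b)*(a*c*b) = a*c*((b*a*(c*b*a))*(c*b)) by noncomm_ring,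
      h4 b a, zero_mul, mul_zero]
  have h5 : (a*c*b)*(a*c*b) = 0 := by
    refine rig_red h _ ?_
    rw [show ((a*c*b)*(a*c*b))*((a*c*b)*(a*c*b)) = ((a*c*b)*(a*c*b)*(a*c*b))*(a*c*b) by
      noncomm_ring, hc, zero_mul]
  exact rig_red h _ h5

private lemma rig_trip {a b c : R} (habc : a * b * c = 0) (s u : ℕ) :
    a * (⇑σ)^[s] b * (⇑σ)^[s + u] c = 0 := by
  have h1 : a * (b * (⇑σ)^[u] c) = 0 := by
    have := rig_sigIt h habc u
    rwa [mul_assoc] at this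
  have h2 : (b * (⇑σ)^[u] c) * a = 0 := rig_swap h h1
  have h3 : (⇑σ)^[s] (b * (⇑σ)^[u] c) * a = 0 := rig_sigIt' h h2 s
  have h4 : a * (⇑σ)^[s] (b * (⇑σ)^[u] c) = 0 := rig_swap h h3
  rw [it_mul, ← Function.iterate_add_apply, ← mul_assoc] at h4
  exact h4

end RigidLemmas
section ConvLemmas

variable {R : Type*} [Ring R] {σ : R →+* R}
variable (h : ∀ a : R, a * σ a = 0 → a = 0)
include h

/-- Armendariz-type lemma for rigid rings: vanishing skew convolution forces
termwise vanishing. -/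
private lemma conv_term_zero {a b : ℕ → R} (hc : ∀ k, skewMul σ a b k = 0) :
    ∀ i j, a i * b j = 0 := by
  suffices H : ∀ k i j, i + j = k → a i * b j = 0 by
    intro i j; exact H (i + j) i j rfl
  intro k
  induction k using Nat.strong_induction_on with
  | _ k IH =>
    have inner : ∀ jj, jj ≤ k + 1 →
        (∀ t, t < jj → a (k - t) * b t = 0) ∧
        (∑ i ∈ Finset.range (k + 1 - jj), a i * (⇑σ)^[i] (b (k - i))) = 0 := by
      intro jj
      induction jj with
      | zero =>
        exact fun _ => ⟨fun t ht => absurd ht (Nat.not_lt_zero t), by simpa [skewMul] using hc k⟩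
      | succ j ihj =>
        intro hj
        have hjk : j ≤ k := by omega
        obtain ⟨hz, hs⟩ := ihj (by omega)
        have hrange : k + 1 - j = (k - j) + 1 := by omega
        rw [hrange] at hs
        -- multiply the sum relation by `b j` on the left
        have hmul : ∑ i ∈ Finset.range ((k - j) + 1), b j * (a i * (⇑σ)^[i] (b (k - i))) = 0 := by
          rw [← Finset.mul_sum, hs, mul_zero]
        rw [Finset.sum_range_succ] at hmul
        have hkill : ∑ i ∈ Finset.range (k - j), b j * (a i * (⇑σ)^[i] (b (k - i))) = 0 := by
          refine Finset.sum_eq_zero fun i hi => ?_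
          have hi' : i < k - j := Finset.mem_range.mp hi
          have hab : a i * b j = 0 := IH (i + j) (by omega) i j rfl
          have hba : b j * a i = 0 := rig_swap h hab
          rw [← mul_assoc, hba, zero_mul]
        rw [hkill, zero_add] at hmul
        -- hmul : b j * (a (k-j) * σ^[k-j] (b (k - (k-j)))) = 0
        rw [show k - (k - j) = j by omega] at hmul
        -- extract a (k-j) * b j = 0
        have e2 : (a (k-j) * (⇑σ)^[k-j] (b j)) * b j = 0 := rig_swap h hmul
        have e3 : (a (k-j) * (⇑σ)^[k-j] (b j)) * (⇑σ)^[k-j] (b j) = 0 := rig_sigIt h e2 (k-j)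
        have e4 : a (k-j) * (⇑σ)^[k-j] (b j * b j) = 0 := by
          rw [it_mul, ← mul_assoc]; exact e3
        have e5 : a (k-j) * (b j * b j) = 0 := rig_unsig h (k-j) e4
        have e6 : (a (k-j) * b j) * b j = 0 := by rwa [← mul_assoc] at e5
        have e7 : b j * (a (k-j) * b j) = 0 := rig_swap h e6
        have e9 : a (k-j) * b j = 0 := by
          refine rig_red h _ ?_
          rw [mul_assoc, e7, mul_zero]
        constructor
        · intro t ht
          rcases Nat.lt_succ_iff_lt_or_eq.mp ht with ht' | rfl
          · exact hz t ht'
          · exact e9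
        · rw [Finset.sum_range_succ] at hs
          rw [show k - (k - j) = j by omega] at hs
          have : a (k-j) * (⇑σ)^[k-j] (b j) = 0 := rig_sigIt h e9 (k-j)
          rw [this, add_zero] at hs
          rw [show k + 1 - (j + 1) = k - j by omega]
          exact hs
    intro i j hij
    have := (inner (k+1) le_rfl).1 j (by omega)
    rwa [show k - j = i by omega] at this

private lemma conv_zero_of_term {a b : ℕ → R} (hz : ∀ i j, a i * b j = 0) :
    ∀ k, skewMul σ a b k = 0 := by
  intro k
  exact Finset.sum_eq_zero fun i _ => rig_sigIt h (hz i (k - i)) i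

end ConvLemmas
section TwoF

variable {R : Type*} [Ring R] {σ : R →+* R}
variable (h : ∀ a : R, a * σ a = 0 → a = 0)
include h

/-- Truncated Armendariz lemma at the level of the skew polynomial ring. -/
private lemma twoF (A B : ℕ → ℕ → R) (N : ℕ)
    (hyp : ∀ d, d < N → ∀ k, ∑ u ∈ Finset.range (d + 1), skewMul σ (A (d - u)) (B u) k = 0) :
    ∀ d1 d2, d1 + d2 < N → ∀ i j, A d1 i * B d2 j = 0 := by
  suffices H : ∀ d, d < N → ∀ u, u ≤ d → ∀ i j, A (d - u) i * B u j = 0 by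
    intro d1 d2 hd i j
    have := H (d1 + d2) hd d2 (by omega) i j
    rwa [show d1 + d2 - d2 = d1 by omega] at this
  intro d
  induction d using Nat.strong_induction_on with
  | _ d IH =>
    intro hdN
    have inner : ∀ jj, jj ≤ d + 1 →
        (∀ t, t < jj → ∀ i j, A (d - t) i * B t j = 0) ∧
        (∀ k, ∑ u ∈ Finset.range (d + 1 - jj), skewMul σ (A (d - (jj + u))) (B (jj + u)) k = 0) := by
      intro jj
      induction jj with
      | zero =>
        refine fun _ => ⟨fun t ht => absurd ht (Nat.not_lt_zero t), fun k => ?_⟩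
        simpa using hyp d hdN k
      | succ j ihj =>
        intro hj
        have hjd : j ≤ d := by omega
        obtain ⟨hz, hs⟩ := ihj (by omega)
        have hkey : ∀ i0 m, B j i0 * (⇑σ)^[i0] (skewMul σ (A (d - j)) (B j) m) = 0 := by
          intro i0 m
          have hmul : ∑ u ∈ Finset.range (d + 1 - j),
              B j i0 * (⇑σ)^[i0] (skewMul σ (A (d - (j + u))) (B (j + u)) m) = 0 := by
            have e : ((⇑σ)^[i0] : R → R) = ⇑(σ ^ i0) := (RingHom.coe_pow σ i0).symm
            rw [e, ← Finset.mul_sum, ← map_sum, hs m, map_zero, mul_zero]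
          have hkill : ∀ u ∈ Finset.range (d + 1 - j), u ≠ 0 →
              B j i0 * (⇑σ)^[i0] (skewMul σ (A (d - (j + u))) (B (j + u)) m) = 0 := by
            intro u hu hu0
            have hu' : u < d + 1 - j := Finset.mem_range.mp hu
            have hIH : ∀ i1 j1, A (d - (j + u)) i1 * B j j1 = 0 := by
              intro i1 j1
              have := IH (d - u) (by omega) (by omega) j (by omega) i1 j1
              rwa [show d - u - j = d - (j + u) by omega] at this
            have hexp : (⇑σ)^[i0] (skewMul σ (A (d - (j + u))) (B (j + u)) m)
                = ∑ l ∈ Finset.range (m + 1),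
                  (⇑σ)^[i0] (A (d - (j + u)) l * (⇑σ)^[l] (B (j + u) (m - l))) := by
              have e : ((⇑σ)^[i0] : R → R) = ⇑(σ ^ i0) := (RingHom.coe_pow σ i0).symm
              rw [e]
              simp only [skewMul]
              exact map_sum _ _ _
            rw [hexp, Finset.mul_sum]
            refine Finset.sum_eq_zero fun l _ => ?_
            rw [it_mul, ← mul_assoc]
            have : B j i0 * (⇑σ)^[i0] (A (d - (j + u)) l) = 0 :=
              rig_sigIt h (rig_swap h (hIH l i0)) i0
            rw [this, zero_mul]
          have h0mem : (0 : ℕ) ∈ Finset.range (d + 1 - j) := Finset.mem_range.mpr (by omega)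
          have hsingle := Finset.sum_eq_single_of_mem 0 h0mem hkill
          rw [hmul] at hsingle
          rw [show j + 0 = j from rfl] at hsingle
          exact hsingle.symm
        -- extract the termwise vanishing for the `u = 0` block
        have hBU : ∀ i0 m, B j i0 * skewMul σ (A (d - j)) (B j) m = 0 :=
          fun i0 m => rig_unsig h i0 (hkey i0 m)
        have hUB : ∀ m i0, skewMul σ (A (d - j)) (B j) m * B j i0 = 0 :=
          fun m i0 => rig_swap h (hBU i0 m)
        have hU0 : ∀ m, skewMul σ (A (d - j)) (B j) m = 0 := by
          intro m
          refine rig_red h _ ?_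
          show skewMul σ (A (d - j)) (B j) m *
            (∑ l ∈ Finset.range (m + 1), A (d - j) l * (⇑σ)^[l] (B j (m - l))) = 0
          rw [Finset.mul_sum]
          refine Finset.sum_eq_zero fun l _ => ?_
          rw [← mul_assoc]
          have h1 : skewMul σ (A (d - j)) (B j) m * (⇑σ)^[l] (B j (m - l)) = 0 :=
            rig_sigIt h (hUB m (m - l)) l
          have h2 := rig_mid h h1 (A (d - j) l)
          rw [show skewMul σ (A (d-j)) (B j) m * A (d-j) l * (⇑σ)^[l] (B j (m-l)) =
            skewMul σ (A (d-j)) (B j) m * (A (d-j) l) * (⇑σ)^[l] (B j (m-l)) from rfl] at h2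
          exact h2
        have hterm : ∀ i1 j1, A (d - j) i1 * B j j1 = 0 := conv_term_zero h hU0
        refine ⟨?_, ?_⟩
        · intro t ht
          rcases Nat.lt_succ_iff_lt_or_eq.mp ht with ht' | rfl
          · exact hz t ht'
          · exact hterm
        · intro k
          have := hs k
          rw [show d + 1 - j = (d - j) + 1 by omega, Finset.sum_range_succ'] at this
          rw [show j + 0 = j from rfl] at this
          rw [hU0 k, add_zero] at this
          rw [show d + 1 - (j + 1) = d - j by omega]
          calc ∑ u ∈ Finset.range (d - j), skewMul σ (A (d - (j + 1 + u))) (B (j + 1 + u)) k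
              = ∑ u ∈ Finset.range (d - j), skewMul σ (A (d - (j + (u + 1)))) (B (j + (u + 1))) k := by
                refine Finset.sum_congr rfl fun u _ => ?_
                rw [show j + 1 + u = j + (u + 1) by omega]
            _ = 0 := this
    intro u hu i j
    have := (inner (d + 1) le_rfl).1 u (by omega) i j
    exact this

end TwoF
section Triple

variable {R : Type*} [Ring R] {σ : R →+* R}
variable (h : ∀ a : R, a * σ a = 0 → a = 0)
include h

private lemma trip_conv {a b c : ℕ → R} (hz : ∀ i j l, a i * b j * c l = 0) :
    ∀ k, skewMul σ (skewMul σ a b) c k = 0 := by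
  intro k
  refine Finset.sum_eq_zero fun m hm => ?_
  have hm' : m < k + 1 := Finset.mem_range.mp hm
  show skewMul σ a b m * (⇑σ)^[m] (c (k - m)) = 0
  rw [show skewMul σ a b m = ∑ i ∈ Finset.range (m + 1), a i * (⇑σ)^[i] (b (m - i)) from rfl,
    Finset.sum_mul]
  refine Finset.sum_eq_zero fun i hi => ?_
  have hi' : i < m + 1 := Finset.mem_range.mp hi
  have := rig_trip h (hz i (m - i) (k - m)) i (m - i)
  rwa [show i + (m - i) = m by omega] at this

private lemma trip_term {a b c : ℕ → R} (hc : ∀ k, skewMul σ (skewMul σ a b) c k = 0) :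
    ∀ i j l, a i * b j * c l = 0 := by
  have step1 : ∀ m l, skewMul σ a b m * c l = 0 := conv_term_zero h hc
  intro i j l
  have step2 : ∀ k, skewMul σ a (fun j' => b j' * (⇑σ)^[j'] (c l)) k = 0 := by
    intro k
    have h1 : skewMul σ a b k * (⇑σ)^[k] (c l) = 0 := rig_sigIt h (step1 k l) k
    calc skewMul σ a (fun j' => b j' * (⇑σ)^[j'] (c l)) k
        = ∑ i' ∈ Finset.range (k + 1), a i' * ((⇑σ)^[i'] (b (k - i')) * (⇑σ)^[k] (c l)) := by
          refine Finset.sum_congr rfl fun i' hi' => ?_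
          have : i' < k + 1 := Finset.mem_range.mp hi'
          rw [it_mul, ← Function.iterate_add_apply, show i' + (k - i') = k by omega]
      _ = skewMul σ a b k * (⇑σ)^[k] (c l) := by
          rw [show skewMul σ a b k = ∑ i' ∈ Finset.range (k + 1), a i' * (⇑σ)^[i'] (b (k - i'))
            from rfl, Finset.sum_mul]
          exact Finset.sum_congr rfl fun i' _ => by rw [mul_assoc]
      _ = 0 := h1
  have := conv_term_zero h step2 i j
  have h2 : (a i * b j) * (⇑σ)^[j] (c l) = 0 := by rwa [mul_assoc]
  exact rig_unsig h j h2

end Triple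
section MatrixLayer

variable {R : Type*} [Ring R] (σ : R →+* R) {n : ℕ}

/-- The value of a `Vn` matrix on its `d`-th diagonal. -/
private def vm (n : ℕ) (M : Matrix (Fin n) (Fin n) R) (d : ℕ) : R :=
  if h : d < n then M ⟨0, Nat.lt_of_le_of_lt (Nat.zero_le d) h⟩ ⟨d, h⟩ else 0

private lemma vn_entry {M : Matrix (Fin n) (Fin n) R} (hM : M ∈ Vn R n) (i j : Fin n) :
    M i j = if (i : ℕ) ≤ (j : ℕ) then vm n M ((j : ℕ) - (i : ℕ)) else 0 := by
  by_cases hij : (i : ℕ) ≤ (j : ℕ)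
  · rw [if_pos hij]
    have hd : (j : ℕ) - (i : ℕ) < n := by omega
    rw [vm, dif_pos hd]
    exact hM.2 i j ⟨0, Nat.lt_of_le_of_lt (Nat.zero_le _) hd⟩ ⟨(j : ℕ) - (i : ℕ), hd⟩
      (by simp; omega)
  · rw [if_neg hij]
    exact hM.1 i j (by omega)

private lemma vn_low {M : Matrix (Fin n) (Fin n) R} (hM : M ∈ Vn R n) {i j : Fin n}
    (hij : (j : ℕ) < (i : ℕ)) : M i j = 0 := hM.1 i j hij

private lemma vn_mul_entry {M N : Matrix (Fin n) (Fin n) R} (hM : M ∈ Vn R n)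
    (hN : N ∈ Vn R n) (i j : Fin n) (hij : (i : ℕ) ≤ (j : ℕ)) :
    (M * N) i j = ∑ t ∈ Finset.range ((j : ℕ) - (i : ℕ) + 1),
      vm n M t * vm n N ((j : ℕ) - (i : ℕ) - t) := by
  rw [Matrix.mul_apply]
  have hstep : ∀ l : Fin n, M i l * N l j =
      (fun l' : ℕ => (if (i : ℕ) ≤ l' then vm n M (l' - (i : ℕ)) else 0) *
        (if l' ≤ (j : ℕ) then vm n N ((j : ℕ) - l') else 0)) (l : ℕ) := by
    intro l
    rw [vn_entry hM i l, vn_entry hN l j]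
  rw [Finset.sum_congr rfl fun l _ => hstep l,
    Fin.sum_univ_eq_sum_range (fun l' : ℕ => (if (i : ℕ) ≤ l' then vm n M (l' - (i : ℕ)) else 0) *
      (if l' ≤ (j : ℕ) then vm n N ((j : ℕ) - l') else 0)) n]
  have hstep2 : ∀ l ∈ Finset.range n,
      (if (i : ℕ) ≤ l then vm n M (l - (i : ℕ)) else 0) *
        (if l ≤ (j : ℕ) then vm n N ((j : ℕ) - l) else 0) =
      if l ∈ Finset.Ico (i : ℕ) ((j : ℕ) + 1) then vm n M (l - (i : ℕ)) * vm n N ((j : ℕ) - l)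
      else 0 := by
    intro l _
    by_cases h1 : (i : ℕ) ≤ l <;> by_cases h2 : l ≤ (j : ℕ) <;>
      simp [Finset.mem_Ico, h1, h2, Nat.lt_succ_iff]
  rw [Finset.sum_congr rfl hstep2, Finset.sum_ite_mem]
  have hinter : Finset.range n ∩ Finset.Ico (i : ℕ) ((j : ℕ) + 1)
      = Finset.Ico (i : ℕ) ((j : ℕ) + 1) := by
    ext l
    simp only [Finset.mem_inter, Finset.mem_range, Finset.mem_Ico]
    have := j.isLt
    omega
  rw [hinter, Finset.sum_Ico_eq_sum_range]
  rw [show (j : ℕ) + 1 - (i : ℕ) = (j : ℕ) - (i : ℕ) + 1 by omega]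
  refine Finset.sum_congr rfl fun t ht => ?_
  have ht' : t < (j : ℕ) - (i : ℕ) + 1 := Finset.mem_range.mp ht
  rw [show (i : ℕ) + t - (i : ℕ) = t by omega, show (j : ℕ) - ((i : ℕ) + t)
    = (j : ℕ) - (i : ℕ) - t by omega]

private lemma vn_mul {M N : Matrix (Fin n) (Fin n) R} (hM : M ∈ Vn R n) (hN : N ∈ Vn R n) :
    M * N ∈ Vn R n := by
  have low : ∀ i j : Fin n, (j : ℕ) < (i : ℕ) → (M * N) i j = 0 := by
    intro i j hij
    rw [Matrix.mul_apply]
    refine Finset.sum_eq_zero fun l _ => ?_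
    by_cases hl : (l : ℕ) < (i : ℕ)
    · rw [vn_low hM hl, zero_mul]
    · rw [vn_low hN (by omega), mul_zero]
  refine ⟨low, ?_⟩
  intro i j i' j' hsum
  by_cases hij : (i : ℕ) ≤ (j : ℕ)
  · have hij' : (i' : ℕ) ≤ (j' : ℕ) := by omega
    rw [vn_mul_entry hM hN i j hij, vn_mul_entry hM hN i' j' hij',
      show (j' : ℕ) - (i' : ℕ) = (j : ℕ) - (i : ℕ) by omega]
  · rw [low i j (by omega), low i' j' (by omega)]

private lemma vn_sum {ι : Type*} (s : Finset ι) (f : ι → Matrix (Fin n) (Fin n) R)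
    (hf : ∀ x ∈ s, f x ∈ Vn R n) : (∑ x ∈ s, f x) ∈ Vn R n := by
  constructor
  · intro i j hij
    rw [Matrix.sum_apply]
    exact Finset.sum_eq_zero fun x hx => (hf x hx).1 i j hij
  · intro i j i' j' hsum
    rw [Matrix.sum_apply, Matrix.sum_apply]
    exact Finset.sum_congr rfl fun x hx => (hf x hx).2 i j i' j' hsum

private lemma mapIt_apply (m : ℕ) (M : Matrix (Fin n) (Fin n) R) (i j : Fin n) :
    ((⇑(σ.mapMatrix : Matrix (Fin n) (Fin n) R →+* Matrix (Fin n) (Fin n) R))^[m] M) i j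
      = (⇑σ)^[m] (M i j) := by
  induction m generalizing M with
  | zero => rfl
  | succ m ih =>
    rw [Function.iterate_succ_apply, Function.iterate_succ_apply]
    rw [ih, RingHom.mapMatrix_apply, Matrix.map_apply]

private lemma vn_mapIt (m : ℕ) {M : Matrix (Fin n) (Fin n) R} (hM : M ∈ Vn R n) :
    (⇑(σ.mapMatrix : Matrix (Fin n) (Fin n) R →+* Matrix (Fin n) (Fin n) R))^[m] M ∈ Vn R n := by
  constructor
  · intro i j hij
    rw [mapIt_apply, vn_low hM hij, it_zero]
  · intro i j i' j' hsum
    rw [mapIt_apply, mapIt_apply, hM.2 i j i' j' hsum]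

private lemma vm_mapIt (m : ℕ) (M : Matrix (Fin n) (Fin n) R) (d : ℕ) :
    vm n ((⇑(σ.mapMatrix : Matrix (Fin n) (Fin n) R →+* Matrix (Fin n) (Fin n) R))^[m] M) d
      = (⇑σ)^[m] (vm n M d) := by
  by_cases hd : d < n
  · rw [vm, vm, dif_pos hd, dif_pos hd, mapIt_apply]
  · rw [vm, vm, dif_neg hd, dif_neg hd, it_zero]

private lemma vn_skewMul {f g : ℕ → Matrix (Fin n) (Fin n) R}
    (hf : ∀ k, f k ∈ Vn R n) (hg : ∀ k, g k ∈ Vn R n) (k : ℕ) :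
    skewMul (σ.mapMatrix) f g k ∈ Vn R n := by
  refine vn_sum _ _ fun m _ => ?_
  exact vn_mul (hf m) (vn_mapIt σ m (hg (k - m)))

private lemma skewMul_entry {f g : ℕ → Matrix (Fin n) (Fin n) R}
    (hf : ∀ k, f k ∈ Vn R n) (hg : ∀ k, g k ∈ Vn R n) (k : ℕ) (i j : Fin n)
    (hij : (i : ℕ) ≤ (j : ℕ)) :
    skewMul (σ.mapMatrix) f g k i j
      = ∑ t ∈ Finset.range ((j : ℕ) - (i : ℕ) + 1),
        skewMul σ (fun m => vm n (f m) t) (fun m => vm n (g m) ((j : ℕ) - (i : ℕ) - t)) k := by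
  show (∑ m ∈ Finset.range (k + 1),
      f m * (⇑(σ.mapMatrix))^[m] (g (k - m))) i j = _
  rw [Matrix.sum_apply]
  have hstep : ∀ m ∈ Finset.range (k + 1),
      (f m * (⇑(σ.mapMatrix))^[m] (g (k - m))) i j
        = ∑ t ∈ Finset.range ((j : ℕ) - (i : ℕ) + 1),
          vm n (f m) t * (⇑σ)^[m] (vm n (g (k - m)) ((j : ℕ) - (i : ℕ) - t)) := by
    intro m _
    rw [vn_mul_entry (hf m) (vn_mapIt σ m (hg (k - m))) i j hij]
    exact Finset.sum_congr rfl fun t _ => by rw [vm_mapIt]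
  rw [Finset.sum_congr rfl hstep, Finset.sum_comm]
  exact Finset.sum_congr rfl fun t _ => rfl

private lemma skewMul_sum_left {ι : Type*} (s : Finset ι) (F : ι → ℕ → R) (g : ℕ → R) (k : ℕ) :
    skewMul σ (fun m => ∑ x ∈ s, F x m) g k = ∑ x ∈ s, skewMul σ (F x) g k := by
  calc skewMul σ (fun m => ∑ x ∈ s, F x m) g k
      = ∑ m ∈ Finset.range (k + 1), ∑ x ∈ s, F x m * (⇑σ)^[m] (g (k - m)) :=
        Finset.sum_congr rfl fun m _ => Finset.sum_mul _ _ _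
    _ = ∑ x ∈ s, ∑ m ∈ Finset.range (k + 1), F x m * (⇑σ)^[m] (g (k - m)) := Finset.sum_comm
    _ = ∑ x ∈ s, skewMul σ (F x) g k := rfl

end MatrixLayer

section MoreLemmas

variable {R : Type*} [Ring R] (σ : R →+* R) {n : ℕ}

private lemma vm_skewMul {f g : ℕ → Matrix (Fin n) (Fin n) R}
    (hf : ∀ k, f k ∈ Vn R n) (hg : ∀ k, g k ∈ Vn R n) {t : ℕ} (ht : t < n) (m : ℕ) :
    vm n (skewMul (σ.mapMatrix) f g m) t
      = ∑ s ∈ Finset.range (t + 1),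
          skewMul σ (fun kk => vm n (f kk) s) (fun kk => vm n (g kk) (t - s)) m := by
  rw [vm, dif_pos ht]
  have := skewMul_entry σ hf hg m ⟨0, Nat.lt_of_le_of_lt (Nat.zero_le t) ht⟩ ⟨t, ht⟩
    (by simp)
  simpa using this

private lemma conv_twist (a b : ℕ → R) (c : R) (m : ℕ) :
    skewMul σ a (fun kk => b kk * (⇑σ)^[kk] c) m = skewMul σ a b m * (⇑σ)^[m] c := by
  show ∑ i ∈ Finset.range (m + 1), a i * (⇑σ)^[i] (b (m - i) * (⇑σ)^[m - i] c)
    = (∑ i ∈ Finset.range (m + 1), a i * (⇑σ)^[i] (b (m - i))) * (⇑σ)^[m] c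
  rw [Finset.sum_mul]
  refine Finset.sum_congr rfl fun i hi => ?_
  have hi' : i < m + 1 := Finset.mem_range.mp hi
  rw [it_mul, mul_assoc, ← Function.iterate_add_apply, show i + (m - i) = m by omega]

end MoreLemmas

theorem Vn_stronglySkewSymmetric_of_rigid
    {R : Type*} [Ring R] (σ : R →+* R)
    (hrigid : ∀ a : R, a * σ a = 0 → a = 0) (n : ℕ) :
    StronglySkewSymmetricOn (σ.mapMatrix : Matrix (Fin n) (Fin n) R →+* Matrix (Fin n) (Fin n) R)
      (Vn R n) := by
  intro p q r hp hq hr hyp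
  have h := hrigid
  -- the `S`-level hypothesis, in the form required by `twoF`
  have hS : ∀ d, d < n → ∀ k, ∑ u ∈ Finset.range (d + 1),
      skewMul σ (fun m => ∑ s ∈ Finset.range ((d - u) + 1),
        skewMul σ (fun kk => vm n (p.coeff kk) s) (fun kk => vm n (q.coeff kk) ((d - u) - s)) m)
        (fun kk => vm n (r.coeff kk) u) k = 0 := by
    intro d hd k
    have e0 : skewMul (σ.mapMatrix) (skewMul (σ.mapMatrix) p.coeff q.coeff) r.coeff k
        ⟨0, Nat.lt_of_le_of_lt (Nat.zero_le d) hd⟩ ⟨d, hd⟩ = 0 := by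
      rw [hyp]; rfl
    rw [skewMul_entry σ (vn_skewMul σ hp hq) hr k _ _ (by simp)] at e0
    simp only [Fin.val_mk, Nat.sub_zero] at e0
    -- rewrite the diagonal of the inner product
    have e1 : ∑ t ∈ Finset.range (d + 1),
        skewMul σ (fun m => ∑ s ∈ Finset.range (t + 1),
          skewMul σ (fun kk => vm n (p.coeff kk) s) (fun kk => vm n (q.coeff kk) (t - s)) m)
          (fun kk => vm n (r.coeff kk) (d - t)) k = 0 := by
      rw [← e0]
      refine Finset.sum_congr rfl fun t ht => ?_
      have ht' : t < d + 1 := Finset.mem_range.mp ht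
      have e2 : (fun m => vm n (skewMul (σ.mapMatrix) p.coeff q.coeff m) t)
          = (fun m => ∑ s ∈ Finset.range (t + 1),
            skewMul σ (fun kk => vm n (p.coeff kk) s) (fun kk => vm n (q.coeff kk) (t - s)) m) :=
        funext fun m => vm_skewMul σ hp hq (by omega) m
      rw [e2]
    -- reflect the sum
    have e3 := Finset.sum_range_reflect (fun t => skewMul σ
      (fun m => ∑ s ∈ Finset.range (t + 1),
        skewMul σ (fun kk => vm n (p.coeff kk) s) (fun kk => vm n (q.coeff kk) (t - s)) m)
      (fun kk => vm n (r.coeff kk) (d - t)) k) (d + 1)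
    simp only [Nat.add_sub_cancel] at e3
    calc ∑ u ∈ Finset.range (d + 1),
        skewMul σ (fun m => ∑ s ∈ Finset.range ((d - u) + 1),
          skewMul σ (fun kk => vm n (p.coeff kk) s)
            (fun kk => vm n (q.coeff kk) ((d - u) - s)) m)
          (fun kk => vm n (r.coeff kk) u) k
        = ∑ u ∈ Finset.range (d + 1),
          skewMul σ (fun m => ∑ s ∈ Finset.range ((d - u) + 1),
            skewMul σ (fun kk => vm n (p.coeff kk) s)
              (fun kk => vm n (q.coeff kk) ((d - u) - s)) m)
            (fun kk => vm n (r.coeff kk) (d - (d - u))) k := by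
          refine Finset.sum_congr rfl fun u hu => ?_
          have hu' : u < d + 1 := Finset.mem_range.mp hu
          rw [show d - (d - u) = u by omega]
      _ = 0 := by rw [e3]; exact e1
  -- first application of twoF
  have hTC := twoF h
    (fun t m => ∑ s ∈ Finset.range (t + 1),
      skewMul σ (fun kk => vm n (p.coeff kk) s) (fun kk => vm n (q.coeff kk) (t - s)) m)
    (fun u kk => vm n (r.coeff kk) u) n hS
  -- second stage: full termwise vanishing
  have hZ3 : ∀ d1 d2 d3, d1 + d2 + d3 < n → ∀ i j l,
      vm n (p.coeff i) d1 * vm n (q.coeff j) d2 * vm n (r.coeff l) d3 = 0 := by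
    intro d1 d2 d3 hlt i j l
    have hyp2 : ∀ t, t < n - d3 → ∀ m, ∑ u ∈ Finset.range (t + 1),
        skewMul σ (fun kk => vm n (p.coeff kk) (t - u))
          (fun kk => vm n (q.coeff kk) u * (⇑σ)^[kk] (vm n (r.coeff l) d3)) m = 0 := by
      intro t ht m
      have h1 := hTC t d3 (by omega) m l
      have h2 : (∑ s ∈ Finset.range (t + 1),
          skewMul σ (fun kk => vm n (p.coeff kk) s) (fun kk => vm n (q.coeff kk) (t - s)) m)
          * (⇑σ)^[m] (vm n (r.coeff l) d3) = 0 := rig_sigIt h h1 m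
      have h3 : ∑ s ∈ Finset.range (t + 1),
          skewMul σ (fun kk => vm n (p.coeff kk) s)
            (fun kk => vm n (q.coeff kk) (t - s) * (⇑σ)^[kk] (vm n (r.coeff l) d3)) m = 0 := by
        calc ∑ s ∈ Finset.range (t + 1),
            skewMul σ (fun kk => vm n (p.coeff kk) s)
              (fun kk => vm n (q.coeff kk) (t - s) * (⇑σ)^[kk] (vm n (r.coeff l) d3)) m
            = ∑ s ∈ Finset.range (t + 1),
              skewMul σ (fun kk => vm n (p.coeff kk) s) (fun kk => vm n (q.coeff kk) (t - s)) m
                * (⇑σ)^[m] (vm n (r.coeff l) d3) :=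
              Finset.sum_congr rfl fun s _ => conv_twist σ _ _ _ m
          _ = 0 := by rw [← Finset.sum_mul]; exact h2
      -- reflect
      have e3 := Finset.sum_range_reflect (fun s => skewMul σ (fun kk => vm n (p.coeff kk) s)
        (fun kk => vm n (q.coeff kk) (t - s) * (⇑σ)^[kk] (vm n (r.coeff l) d3)) m) (t + 1)
      simp only [Nat.add_sub_cancel] at e3
      calc ∑ u ∈ Finset.range (t + 1),
          skewMul σ (fun kk => vm n (p.coeff kk) (t - u))
            (fun kk => vm n (q.coeff kk) u * (⇑σ)^[kk] (vm n (r.coeff l) d3)) m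
          = ∑ u ∈ Finset.range (t + 1),
            skewMul σ (fun kk => vm n (p.coeff kk) (t - u))
              (fun kk => vm n (q.coeff kk) (t - (t - u)) * (⇑σ)^[kk] (vm n (r.coeff l) d3)) m := by
            refine Finset.sum_congr rfl fun u hu => ?_
            have hu' : u < t + 1 := Finset.mem_range.mp hu
            rw [show t - (t - u) = u by omega]
        _ = 0 := by rw [e3]; exact h3
    have hfin := twoF h (fun d kk => vm n (p.coeff kk) d)
      (fun u kk => vm n (q.coeff kk) u * (⇑σ)^[kk] (vm n (r.coeff l) d3)) (n - d3) hyp2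
      d1 d2 (by omega) i j
    have h4 : (vm n (p.coeff i) d1 * vm n (q.coeff j) d2) * (⇑σ)^[j] (vm n (r.coeff l) d3) = 0 := by
      rw [mul_assoc]; exact hfin
    exact rig_unsig h j h4
  -- symmetric swap at the scalar level
  have hZ3' : ∀ d1 d2 d3, d1 + d2 + d3 < n → ∀ i j l,
      vm n (p.coeff i) d1 * vm n (r.coeff l) d3 * vm n (q.coeff j) d2 = 0 :=
    fun d1 d2 d3 hlt i j l => rig_symm h (hZ3 d1 d2 d3 hlt i j l)
  -- reconstruct the conclusion
  funext k
  show skewMul (σ.mapMatrix) (skewMul (σ.mapMatrix) p.coeff r.coeff) q.coeff k = 0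
  ext i j
  rw [Matrix.zero_apply]
  by_cases hij : (i : ℕ) ≤ (j : ℕ)
  · rw [skewMul_entry σ (vn_skewMul σ hp hr) hq k i j hij]
    refine Finset.sum_eq_zero fun t ht => ?_
    have ht' : t < (j : ℕ) - (i : ℕ) + 1 := Finset.mem_range.mp ht
    have htn : t < n := by have := j.isLt; omega
    have e2 : (fun m => vm n (skewMul (σ.mapMatrix) p.coeff r.coeff m) t)
        = (fun m => ∑ s ∈ Finset.range (t + 1),
          skewMul σ (fun kk => vm n (p.coeff kk) s) (fun kk => vm n (r.coeff kk) (t - s)) m) :=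
      funext fun m => vm_skewMul σ hp hr htn m
    rw [e2, skewMul_sum_left]
    refine Finset.sum_eq_zero fun s hs => ?_
    have hs' : s < t + 1 := Finset.mem_range.mp hs
    refine trip_conv h (fun i' j' l' => ?_) k
    have hj := j.isLt
    exact hZ3' s ((j : ℕ) - (i : ℕ) - t) (t - s) (by omega) i' l' j'
  · exact (vn_skewMul σ (vn_skewMul σ hp hr) hq k).1 i j (by omega)
end
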